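/- arXiv:2206.05660 — 6 statements merged into one kernel-verified Lean document; each statement's English description precedes it below -/
import Mathlib

section
/- For relatively prime positive integers a and b, every integer N greater than (p+1)·a·b − a − b has more than p representations as x·a + y·b with nonnegative integers x and y; moreover, the integer (p+1)·a·b − a − b itself has exactly p such representations. Hence the p-Frobenius number of {a, b} is g_p(a,b) = (p+1)·a·b − a − b. -/
noncomputable def repCount2 (a b : ℕ) (n : ℤ) : ℕ :=
  Nat.card {v : ℕ × ℕ // (v.1 : ℤ) * a + v.2 * b = n}

lemma repCount_eq (a b : ℕ) (ha : 0 < a) (hb : 0 < b) (hab : Nat.Coprime a b)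
    (n : ℤ) (x0 y0 : ℕ) (hx : x0 < b) (heq : (x0 : ℤ) * a + y0 * b = n) :
    repCount2 a b n = y0 / a + 1 := by
  have hco : IsCoprime (a : ℤ) (b : ℤ) := by
    rw [Nat.isCoprime_iff_coprime]; exact hab
  have key : ∀ t : Fin (y0 / a + 1), (t : ℕ) * a ≤ y0 := by
    intro t
    have ht : (t : ℕ) ≤ y0 / a := Nat.lt_succ_iff.mp t.2
    calc (t : ℕ) * a ≤ (y0 / a) * a := Nat.mul_le_mul_right _ ht
      _ ≤ y0 := Nat.div_mul_le_self _ _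
  have e : Fin (y0 / a + 1) ≃ {v : ℕ × ℕ // (v.1 : ℤ) * a + v.2 * b = n} := by
    refine Equiv.ofBijective (fun t => ⟨(x0 + t * b, y0 - t * a), ?_⟩) ⟨?_, ?_⟩
    · have h := key t
      push_cast [Nat.cast_sub h]
      linear_combination heq
    · intro t t' h
      have h1 : x0 + (t : ℕ) * b = x0 + (t' : ℕ) * b := congrArg (fun v => v.1.1) h
      have : (t : ℕ) = (t' : ℕ) := by
        have := Nat.add_left_cancel h1
        exact Nat.eq_of_mul_eq_mul_right hb this
      exact Fin.ext this
    · rintro ⟨⟨x, y⟩, hxy⟩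
      simp only at hxy
      have h1 : ((x : ℤ) - x0) * a = ((y0 : ℤ) - y) * b := by linear_combination hxy - heq
      have hdvd : (b : ℤ) ∣ ((x : ℤ) - x0) := by
        have : (b : ℤ) ∣ ((x : ℤ) - x0) * a := ⟨(y0 : ℤ) - y, by linarith⟩
        exact hco.symm.dvd_of_dvd_mul_right this
      obtain ⟨k, hk⟩ := hdvd
      have hk0 : 0 ≤ k := by
        by_contra hneg
        push_neg at hneg
        have : k ≤ -1 := by omega
        have hx' : (x : ℤ) = x0 + b * k := by linarith
        have : (x : ℤ) < 0 := by nlinarith [Int.toNat_of_nonneg (le_of_lt (Int.natCast_pos.mpr hb))]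
        omega
      have hya : (y : ℤ) = y0 - k * a := by
        have hb' : (0 : ℤ) < b := Int.natCast_pos.mpr hb
        have h2 : (b * k) * a = ((y0 : ℤ) - y) * b := by rw [← hk]; exact h1
        have : k * a = (y0 : ℤ) - y := by
          have := mul_left_cancel₀ (ne_of_gt hb') (by ring_nf; ring_nf at h2; linarith : (b : ℤ) * (k * a) = b * ((y0 : ℤ) - y))
          exact this
        linarith
      have hka : k * a ≤ (y0 : ℤ) := by
        have : (0 : ℤ) ≤ y := Int.natCast_nonneg y
        linarith
      set t : ℕ := k.toNat with hts
      have hkt : (t : ℤ) = k := Int.toNat_of_nonneg hk0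
      have hta : t * a ≤ y0 := by
        have : ((t * a : ℕ) : ℤ) ≤ (y0 : ℤ) := by push_cast; rw [hkt]; exact hka
        exact_mod_cast this
      have htlt : t < y0 / a + 1 := by
        have : t ≤ y0 / a := (Nat.le_div_iff_mul_le ha).mpr hta
        omega
      refine ⟨⟨t, htlt⟩, ?_⟩
      apply Subtype.ext
      simp only
      have hxv : x = x0 + t * b := by
        have : (x : ℤ) = x0 + t * b := by rw [hkt]; linarith
        exact_mod_cast this
      have hyv : y = y0 - t * a := by
        have : (y : ℤ) = ((y0 - t * a : ℕ) : ℤ) := by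
          rw [Nat.cast_sub hta]; push_cast; rw [hkt]; linarith
        exact_mod_cast this
      exact Prod.ext hxv.symm hyv.symm
  rw [repCount2, ← Nat.card_congr e, Nat.card_eq_fintype_card, Fintype.card_fin]

lemma repCount_zero (a b : ℕ) (ha : 0 < a) (hb : 0 < b) (hab : Nat.Coprime a b) :
    repCount2 a b ((a : ℤ) * b - a - b) = 0 := by
  have hco : IsCoprime (a : ℤ) (b : ℤ) := by
    rw [Nat.isCoprime_iff_coprime]; exact hab
  rw [repCount2, Nat.card_eq_zero]
  left
  constructor
  rintro ⟨⟨x, y⟩, hxy⟩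
  simp only at hxy
  have heq : ((x : ℤ) + 1) * a + ((y : ℤ) + 1) * b = a * b := by linarith
  have hda : (a : ℤ) ∣ ((y : ℤ) + 1) * b := ⟨b - (x + 1), by linarith⟩
  have hdb : (b : ℤ) ∣ ((x : ℤ) + 1) * a := ⟨a - (y + 1), by linarith⟩
  have hda' : (a : ℤ) ∣ ((y : ℤ) + 1) := hco.dvd_of_dvd_mul_right hda
  have hdb' : (b : ℤ) ∣ ((x : ℤ) + 1) := hco.symm.dvd_of_dvd_mul_right hdb
  have h1 : (a : ℤ) ≤ (y : ℤ) + 1 := Int.le_of_dvd (by positivity) hda'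
  have h2 : (b : ℤ) ≤ (x : ℤ) + 1 := Int.le_of_dvd (by positivity) hdb'
  have ha' : (0 : ℤ) < a := by exact_mod_cast ha
  have hb' : (0 : ℤ) < b := by exact_mod_cast hb
  nlinarith

theorem stmt0 (a b : ℕ) (ha : 0 < a) (hb : 0 < b) (hab : Nat.Coprime a b) (p : ℕ) :
    (∀ N : ℤ, (p + 1 : ℤ) * a * b - a - b < N → p < repCount2 a b N) ∧
    repCount2 a b ((p + 1 : ℤ) * a * b - a - b) = p ∧
    IsGreatest {n : ℤ | repCount2 a b n ≤ p} ((p + 1 : ℤ) * a * b - a - b) := by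
  have ha' : (0 : ℤ) < a := by exact_mod_cast ha
  have hb' : (0 : ℤ) < b := by exact_mod_cast hb
  have hco : IsCoprime (a : ℤ) (b : ℤ) := by
    rw [Nat.isCoprime_iff_coprime]; exact hab
  have part1 : ∀ N : ℤ, (p + 1 : ℤ) * a * b - a - b < N → p < repCount2 a b N := by
    intro N hN
    obtain ⟨u, v, huv⟩ := hco
    set x0' : ℤ := (u * N) % b with hx0'
    have hx0nn : 0 ≤ x0' := Int.emod_nonneg _ (ne_of_gt hb')
    have hx0lt : x0' < b := Int.emod_lt_of_pos _ hb'
    have hdvd : x0' = u * N - b * (u * N / b) := by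
      rw [hx0', Int.emod_def]
    set y0' : ℤ := (u * N / b) * a + v * N with hy0'
    have heq : x0' * a + y0' * b = N := by
      rw [hdvd, hy0']
      have : (u * a + v * b) * N = N := by rw [huv]; ring
      linear_combination this
    have hy0lb : b * (p * a - 1) < b * y0' := by
      have h1 : x0' * a ≤ (b - 1) * a := by nlinarith
      nlinarith
    have hy0 : (p : ℤ) * a ≤ y0' := by
      have := lt_of_mul_lt_mul_left hy0lb (le_of_lt hb')
      omega
    have hy0nn : 0 ≤ y0' := le_trans (by positivity) hy0
    have hres := repCount_eq a b ha hb hab N x0'.toNat y0'.toNat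
      (by omega) (by rw [Int.toNat_of_nonneg hx0nn, Int.toNat_of_nonneg hy0nn]; exact heq)
    rw [hres]
    have hpay : p * a ≤ y0'.toNat := by
      have : ((p * a : ℕ) : ℤ) ≤ y0' := by push_cast; exact hy0
      omega
    have : p ≤ y0'.toNat / a := (Nat.le_div_iff_mul_le ha).mpr hpay
    omega
  have part2 : repCount2 a b ((p + 1 : ℤ) * a * b - a - b) = p := by
    cases p with
    | zero =>
      have := repCount_zero a b ha hb hab
      convert this using 2
      ring
    | succ q =>
      have hcast : ((q + 1 : ℕ) : ℤ) + 1 = (q : ℤ) + 1 + 1 := by push_cast; ring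
      rw [hcast]
      have hres := repCount_eq a b ha hb hab (((q : ℤ) + 1 + 1) * a * b - a - b)
        (b - 1) (a * q + (a - 1)) (by omega)
        (by push_cast [Nat.cast_sub hb, Nat.cast_sub ha]; ring)
      rw [hres, Nat.mul_add_div ha, Nat.div_eq_of_lt (by omega)]
  refine ⟨part1, part2, ⟨part2.le, fun n hn => ?_⟩⟩
  by_contra h
  push_neg at h
  exact absurd hn (not_le.mpr (part1 n h))
end

section
/- Let a₁ < a₂ < ... < a_l be positive integers with gcd 1, and let p ≥ 0. For each residue j with 0 ≤ j ≤ a₁−1, let m_j^{(p)} be the least positive integer congruent to j modulo a₁ that has at least p+1 representations as a nonnegative integer combination of a₁,...,a_l. Then g_p(a₁,...,a_l) = max_{0≤j≤a₁−1} m_j^{(p)} − a₁. -/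
/-- Number of representations of `n` as a nonnegative integer combination of `a 0, ..., a l`. -/
noncomputable def repCountL (l : ℕ) (a : Fin (l + 1) → ℕ) (n : ℤ) : ℕ :=
  Nat.card {x : Fin (l + 1) → ℕ // (∑ i, (x i : ℤ) * a i) = n}

lemma reps_finite (l : ℕ) (a : Fin (l + 1) → ℕ) (ha : ∀ i, 0 < a i) (n : ℤ) :
    Finite {x : Fin (l + 1) → ℕ // (∑ i, (x i : ℤ) * a i) = n} := by
  have hb : ∀ (x : {x : Fin (l + 1) → ℕ // (∑ i, (x i : ℤ) * a i) = n}) (i : Fin (l+1)),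
      x.1 i < n.toNat + 1 := by
    intro x i
    have h1 : (x.1 i : ℤ) * a i ≤ ∑ j, (x.1 j : ℤ) * a j :=
      Finset.single_le_sum (f := fun i => (x.1 i : ℤ) * a i)
        (fun j _ => by positivity) (Finset.mem_univ i)
    rw [x.2] at h1
    have h2 : (x.1 i : ℤ) ≤ (x.1 i : ℤ) * a i :=
      le_mul_of_one_le_right (by positivity) (by exact_mod_cast ha i)
    have : (x.1 i : ℤ) ≤ n := le_trans h2 h1
    omega
  apply Finite.of_injective (β := Fin (l+1) → Fin (n.toNat + 1))
    (f := fun x => fun i => ⟨x.1 i, hb x i⟩)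
  intro x y hxy
  apply Subtype.ext
  funext i
  have := congrFun hxy i
  simpa using congrArg Fin.val this

lemma repCount_le_shift (l : ℕ) (a : Fin (l + 1) → ℕ) (ha : ∀ i, 0 < a i) (n : ℤ) :
    repCountL l a n ≤ repCountL l a (n + a 0) := by
  have : Finite {x : Fin (l + 1) → ℕ // (∑ i, (x i : ℤ) * a i) = n + a 0} :=
    reps_finite l a ha _
  apply Nat.card_le_card_of_injective
    (f := fun x => ⟨x.1 + Pi.single 0 1, by
      have hx := x.2
      have hsingle :
          (∑ i, (((Pi.single (0 : Fin (l+1)) (1:ℕ)) : Fin (l+1) → ℕ) i : ℤ) * a i) = a 0 := by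
        rw [Fin.sum_univ_succ]
        simp [Pi.single_eq_same, Pi.single_eq_of_ne (Fin.succ_ne_zero _)]
      calc (∑ i, (((x.1 + (Pi.single 0 1 : Fin (l+1) → ℕ)) i : ℤ)) * a i)
          = (∑ i, (x.1 i : ℤ) * a i)
              + ∑ i, (((Pi.single (0 : Fin (l+1)) (1:ℕ)) : Fin (l+1) → ℕ) i : ℤ) * a i := by
            rw [← Finset.sum_add_distrib]
            apply Finset.sum_congr rfl
            intro i _
            simp only [Pi.add_apply]
            push_cast
            ring
        _ = n + a 0 := by rw [hx, hsingle]⟩)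
  intro x y hxy
  apply Subtype.ext
  have h := congrArg Subtype.val hxy
  simpa using add_right_cancel (a := x.1) (b := (Pi.single 0 1 : Fin (l+1) → ℕ)) (c := y.1)
    (by simpa using h)

lemma repCount_le_add_mul (l : ℕ) (a : Fin (l + 1) → ℕ) (ha : ∀ i, 0 < a i) (n : ℤ) (k : ℕ) :
    repCountL l a n ≤ repCountL l a (n + k * a 0) := by
  induction k with
  | zero => simp
  | succ k ih =>
    have h2 := repCount_le_shift l a ha (n + k * a 0)
    have : n + (k : ℤ) * a 0 + a 0 = n + ((k : ℕ) + 1 : ℕ) * a 0 := by push_cast; ring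
    rw [this] at h2
    exact le_trans ih h2

lemma repCount_neg (l : ℕ) (a : Fin (l + 1) → ℕ) (n : ℤ) (hn : n < 0) :
    repCountL l a n = 0 := by
  have : IsEmpty {x : Fin (l + 1) → ℕ // (∑ i, (x i : ℤ) * a i) = n} := by
    constructor
    rintro ⟨x, hx⟩
    have : (0:ℤ) ≤ ∑ i, (x i : ℤ) * a i :=
      Finset.sum_nonneg (fun i _ => by positivity)
    omega
  simp [repCountL, Nat.card_of_isEmpty]

theorem stmt1 (l : ℕ) (a : Fin (l + 1) → ℕ) (ha : ∀ i, 0 < a i) (hmono : StrictMono a)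
    (hgcd : Finset.univ.gcd a = 1) (p : ℕ) (m : Fin (a 0) → ℕ)
    (hm : ∀ j : Fin (a 0), IsLeast
      {x : ℕ | x % a 0 = (j : ℕ) ∧ p + 1 ≤ repCountL l a (x : ℤ)} (m j))
    (M : ℕ) (hM : IsGreatest (Set.range m) M) :
    IsGreatest {n : ℤ | repCountL l a n ≤ p} ((M : ℤ) - a 0) := by
  have ha0 : 0 < a 0 := ha 0
  constructor
  · -- M - a 0 has at most p representations
    obtain ⟨j, hj⟩ := hM.1
    by_cases hMa : a 0 ≤ M
    · have hcast : (M : ℤ) - a 0 = ((M - a 0 : ℕ) : ℤ) := by omega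
      rw [Set.mem_setOf_eq, hcast]
      by_contra h
      push_neg at h
      have hmem : (M - a 0) ∈ {x : ℕ | x % a 0 = (j : ℕ) ∧ p + 1 ≤ repCountL l a (x : ℤ)} := by
        constructor
        · have h1 : (M - a 0 + a 0) % a 0 = (M - a 0) % a 0 := Nat.add_mod_right _ _
          have h2 : M - a 0 + a 0 = M := by omega
          rw [h2] at h1
          have h3 : M % a 0 = (j : ℕ) := by rw [← hj]; exact (hm j).1.1
          rw [← h1, h3]
        · omega
      have := (hm j).2 hmem
      rw [hj] at this
      omega
    · rw [Set.mem_setOf_eq, repCount_neg l a _ (by omega)]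
      omega
  · -- upper bound
    intro n hn
    rw [Set.mem_setOf_eq] at hn
    by_contra h
    push_neg at h
    by_cases hn0 : n < 0
    · set j : Fin (a 0) := ⟨a 0 - 1, by omega⟩
      have h1 : m j % a 0 = a 0 - 1 := (hm j).1.1
      have h2 : m j ≤ M := hM.2 ⟨j, rfl⟩
      have h3 : m j % a 0 ≤ m j := Nat.mod_le _ _
      omega
    · push_neg at hn0
      set N := n.toNat with hN
      have hNn : (N : ℤ) = n := Int.toNat_of_nonneg hn0
      set j : Fin (a 0) := ⟨N % a 0, Nat.mod_lt _ ha0⟩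
      have hj1 : m j % a 0 = N % a 0 := (hm j).1.1
      have hj2 : p + 1 ≤ repCountL l a (m j : ℤ) := (hm j).1.2
      have hjM : m j ≤ M := hM.2 ⟨j, rfl⟩
      have hNa : m j < N + a 0 := by omega
      have hmjN : m j ≤ N := by
        by_contra hlt
        push_neg at hlt
        have hmod : N ≡ m j [MOD a 0] := hj1.symm
        have hdvd : a 0 ∣ m j - N := (Nat.modEq_iff_dvd' hlt.le).mp hmod
        have := Nat.le_of_dvd (by omega) hdvd
        omega
      have hdvd : a 0 ∣ N - m j := by
        have hmod : m j ≡ N [MOD a 0] := hj1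
        exact (Nat.modEq_iff_dvd' hmjN).mp hmod
      obtain ⟨k, hk⟩ := hdvd
      have hN2 : N = a 0 * k + m j := (Nat.sub_eq_iff_eq_add hmjN).mp hk
      have hle : repCountL l a (m j : ℤ) ≤ repCountL l a ((m j : ℤ) + k * a 0) :=
        repCount_le_add_mul l a ha _ k
      have heq : ((m j : ℤ)) + k * a 0 = n := by
        rw [← hNn, hN2]
        push_cast
        ring
      rw [heq] at hle
      omega
end

section
/- For integers i, k ≥ 3, let L_n denote the Lucas numbers and F_n the Fibonacci numbers, and set r = ⌊(L_i − 1)/F_k⌋. Then the Frobenius number of (L_i, L_{i+2}, L_{i+k}) equals (L_i − 1)·L_{i+2} − L_i·(r·F_{k−2} + 1) if r = 0, or if r ≥ 1 and (L_i − r·F_k)·L_{i+2} > F_{k−2}·L_i; otherwise it equals (r·F_k − 1)·L_{i+2} − L_i·((r−1)·F_{k−2} + 1). -/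
/-- Number of representations of `n` as a nonnegative integer combination of `a`, `b`, `c`. -/
noncomputable def repCount (a b c : ℕ) (n : ℤ) : ℕ :=
  Nat.card {v : ℕ × ℕ × ℕ // (v.1 : ℤ) * a + v.2.1 * b + v.2.2 * c = n}

/-- `g` is the `p`-Frobenius number of `a, b, c`: the largest integer with at most `p`
representations. -/
def IsPFrob (p a b c : ℕ) (g : ℤ) : Prop :=
  IsGreatest {n : ℤ | repCount a b c n ≤ p} g

/-- Lucas numbers. -/
def lucas : ℕ → ℕ
  | 0 => 2
  | 1 => 1
  | n + 2 => lucas n + lucas (n + 1)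


lemma lucas_pos : ∀ n, 0 < lucas n
  | 0 => by decide
  | 1 => by decide
  | n + 2 => by
      have h := lucas_pos n
      show 0 < lucas n + lucas (n + 1)
      omega

lemma lucas_gcd : ∀ n, Nat.gcd (lucas n) (lucas (n + 1)) = 1
  | 0 => by decide
  | n + 1 => by
      have ih := lucas_gcd n
      show Nat.gcd (lucas (n + 1)) (lucas n + lucas (n + 1)) = 1
      rw [Nat.gcd_add_self_right, Nat.gcd_comm]
      exact ih

lemma lucas_coprime (n : ℕ) : Nat.Coprime (lucas n) (lucas (n + 2)) := by
  have : Nat.gcd (lucas n) (lucas n + lucas (n + 1)) = 1 := by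
    rw [Nat.gcd_self_add_right]
    exact lucas_gcd n
  exact this

lemma lucas_fib (i : ℕ) : ∀ m, lucas (i + m + 2) + Nat.fib m * lucas i = Nat.fib (m + 2) * lucas (i + 2)
  | 0 => by simp
  | 1 => by
      have h1 : lucas (i + 1 + 2) = lucas (i + 1) + lucas (i + 2) := rfl
      have h2 : lucas (i + 2) = lucas i + lucas (i + 1) := rfl
      simp [Nat.fib]
      omega
  | m + 2 => by
      have h1 := lucas_fib i m
      have h2 := lucas_fib i (m + 1)
      have e1 : lucas (i + (m + 2) + 2) = lucas (i + m + 2) + lucas (i + (m + 1) + 2) := by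
        show lucas ((i + m + 2) + 2) = _
        rw [lucas]
        ring_nf
      have e2 : Nat.fib (m + 2) = Nat.fib m + Nat.fib (m + 1) := Nat.fib_add_two
      have e3 : Nat.fib (m + 2 + 2) = Nat.fib (m + 2) + Nat.fib (m + 2 + 1) := Nat.fib_add_two
      have e4 : Nat.fib (m + 2 + 1) = Nat.fib (m + 1) + Nat.fib (m + 1 + 1) := Nat.fib_add_two
      have e5 : (Nat.fib m + Nat.fib (m+1)) * lucas i = Nat.fib m * lucas i + Nat.fib (m+1) * lucas i := by ring
      have e6 : (Nat.fib (m+2) + Nat.fib (m+2+1)) * lucas (i+2) = Nat.fib (m+2) * lucas (i+2) + Nat.fib (m+2+1) * lucas (i+2) := by ring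
      have e7 : (Nat.fib (m+1) + Nat.fib (m+1+1)) * lucas (i+2) = Nat.fib (m+1) * lucas (i+2) + Nat.fib (m+1+1) * lucas (i+2) := by ring
      have e9 : Nat.fib (m + 2) * lucas i = Nat.fib m * lucas i + Nat.fib (m + 1) * lucas i := by
        rw [e2]; ring
      have h2' : lucas (i + (m + 1) + 2) + Nat.fib (m + 1) * lucas i
          = Nat.fib (m + 2 + 1) * lucas (i + 2) := h2
      rw [e1, e3, e6, e4, e7, e9]
      rw [e4] at h2'
      rw [show (Nat.fib (m + 1) + Nat.fib (m + 2)) * lucas (i + 2)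
          = Nat.fib (m + 1) * lucas (i + 2) + Nat.fib (m + 2) * lucas (i + 2) from by ring] at h2'
      linarith [h1, h2']


/-- `f s = s*b - (s/Fk)*Fk2*a`, the candidate Apéry element in class `s*b mod a`. -/
def fval (a b Fk Fk2 s : ℕ) : ℤ := (s : ℤ) * b - ((s / Fk : ℕ) : ℤ) * ((Fk2 : ℤ) * a)

section aux
variable {a b Fk Fk2 c : ℕ}
variable (ha : 0 < a) (hab : a < b) (hFk2 : 0 < Fk2) (hFle : 2 * Fk2 ≤ Fk)
variable (hc : c + Fk2 * a = Fk * b)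

include ha hab hFk2 hFle hc in
/-- key bound: `Fk2*a + Fk ≤ c` (in ℤ). -/
lemma c_lb : (Fk2 : ℤ) * a + Fk ≤ (c : ℤ) := by
  have hcz : (c : ℤ) + Fk2 * a = Fk * b := by exact_mod_cast hc
  have h1 : (Fk : ℤ) * (a + 1) ≤ Fk * b := by
    have : (a : ℤ) + 1 ≤ b := by exact_mod_cast hab
    have : (0:ℤ) ≤ Fk := by positivity
    nlinarith
  have h2 : (2 * Fk2 : ℤ) * a ≤ Fk * a := by
    have h3 : (2 * Fk2 : ℤ) ≤ Fk := by exact_mod_cast hFle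
    have : (0:ℤ) ≤ a := by positivity
    nlinarith
  nlinarith

include ha hab hFk2 hFle hc in
lemma fval_mod_le (Y : ℕ) : fval a b Fk Fk2 (Y % a) ≤ fval a b Fk Fk2 Y := by
  have hFk : 0 < Fk := by omega
  rcases Nat.lt_or_ge Y a with h | h
  · rw [Nat.mod_eq_of_lt h]
  · set s := Y % a with hs
    have hsa : s < a := Nat.mod_lt _ ha
    have hsY : s + a ≤ Y := by
      have h1 := Nat.mod_add_div Y a
      have h2 : 1 ≤ Y / a := (Nat.one_le_div_iff ha).mpr h
      have h3 : a * 1 ≤ a * (Y / a) := Nat.mul_le_mul_left a h2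
      omega
    have hcz : (c : ℤ) + Fk2 * a = Fk * b := by exact_mod_cast hc
    have hclb := c_lb ha hab hFk2 hFle hc
    -- bound : Fk2 * (s % Fk) ≤ c
    have hb1 : (Fk2 : ℤ) * ((s % Fk : ℕ) : ℤ) ≤ c := by
      have h4 : ((s % Fk : ℕ) : ℤ) ≤ (s : ℤ) := by exact_mod_cast Nat.mod_le s Fk
      have h5 : (s : ℤ) ≤ (a : ℤ) - 1 := by
        have : s < a := hsa
        omega
      have h6 : (0:ℤ) < Fk2 := by exact_mod_cast hFk2
      nlinarith
    have hq : (Fk : ℤ) * ((Y / Fk : ℕ) : ℤ) ≤ (Y : ℤ) := by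
      have := Nat.div_mul_le_self Y Fk
      have : ((Y / Fk : ℕ) : ℤ) * Fk ≤ (Y : ℤ) := by exact_mod_cast this
      linarith
    have hsq : (Fk : ℤ) * ((s / Fk : ℕ) : ℤ) = (s : ℤ) - ((s % Fk : ℕ) : ℤ) := by
      have := Nat.mod_add_div s Fk
      have h7 : ((s % Fk : ℕ) : ℤ) + (Fk : ℤ) * ((s / Fk : ℕ) : ℤ) = (s : ℤ) := by exact_mod_cast this
      linarith
    -- multiply goal by Fk > 0
    have hFkZ : (0:ℤ) < Fk := by exact_mod_cast hFk
    have main : (Fk : ℤ) * fval a b Fk Fk2 s ≤ (Fk : ℤ) * fval a b Fk Fk2 Y := by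
      have e1 : (Fk : ℤ) * fval a b Fk Fk2 s = (s : ℤ) * c + ((s % Fk : ℕ) : ℤ) * ((Fk2:ℤ) * a) := by
        rw [fval]
        linear_combination (-(s : ℤ)) * hcz - ((Fk2:ℤ) * a) * hsq
      have e2 : (Y : ℤ) * c ≤ (Fk : ℤ) * fval a b Fk Fk2 Y := by
        rw [fval]
        have hFk2a : (0:ℤ) ≤ (Fk2:ℤ) * a := by positivity
        nlinarith [mul_le_mul_of_nonneg_right hq hFk2a]
      have e3 : (s : ℤ) * c + ((s % Fk : ℕ) : ℤ) * ((Fk2:ℤ) * a) ≤ (Y : ℤ) * c := by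
        have hY : (s : ℤ) + a ≤ Y := by exact_mod_cast hsY
        have hcnn : (0:ℤ) ≤ c := by positivity
        have hann : (0:ℤ) ≤ a := by positivity
        nlinarith [mul_le_mul_of_nonneg_right hb1 hann]
      linarith [e1 ▸ le_trans (le_of_eq e1) (le_trans e3 e2)]
    exact le_of_mul_le_mul_left main hFkZ

set_option linter.unusedSectionVars false

include ha hab hFk2 hFle hc in
lemma rep_iff (n : ℤ) :
    (∃ x y z : ℕ, (x : ℤ) * a + y * b + z * c = n) ↔
      ∃ s, s < a ∧ (a : ℤ) ∣ n - fval a b Fk Fk2 s ∧ fval a b Fk Fk2 s ≤ n := by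
  have hFk : 0 < Fk := by omega
  have hcz : (c : ℤ) + Fk2 * a = Fk * b := by exact_mod_cast hc
  constructor
  · rintro ⟨x, y, z, hxyz⟩
    set Y := y + z * Fk with hY
    have hzq : z ≤ Y / Fk := (Nat.le_div_iff_mul_le hFk).mpr (Nat.le_add_left (z * Fk) y)
    have hy : (Y : ℤ) = (y : ℤ) + (z : ℤ) * Fk := by push_cast [hY]; ring
    have hzqZ : (z : ℤ) ≤ ((Y / Fk : ℕ) : ℤ) := by exact_mod_cast hzq
    have d1 : n - fval a b Fk Fk2 Y = ((x : ℤ) + (((Y / Fk : ℕ) : ℤ) - z) * Fk2) * a := by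
      rw [fval]
      linear_combination (-1 : ℤ) * hxyz + (-(b : ℤ)) * hy + (z : ℤ) * hcz
    have hmod := Nat.mod_add_div Y a
    have hmodZ : ((Y % a : ℕ) : ℤ) + (a : ℤ) * ((Y / a : ℕ) : ℤ) = (Y : ℤ) := by
      exact_mod_cast hmod
    refine ⟨Y % a, Nat.mod_lt _ ha, ?_, ?_⟩
    · have d2 : fval a b Fk Fk2 Y - fval a b Fk Fk2 (Y % a) =
          (a : ℤ) * (((Y / a : ℕ) : ℤ) * b - (((Y / Fk : ℕ) : ℤ) - ((Y % a / Fk : ℕ) : ℤ)) * Fk2) := by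
        rw [fval, fval]
        linear_combination (-(b : ℤ)) * hmodZ
      have dv1 : (a : ℤ) ∣ n - fval a b Fk Fk2 Y :=
        ⟨(x : ℤ) + (((Y / Fk : ℕ) : ℤ) - z) * Fk2, by linarith [d1]⟩
      have dv2 : (a : ℤ) ∣ fval a b Fk Fk2 Y - fval a b Fk Fk2 (Y % a) := ⟨_, d2⟩
      have := dvd_add dv1 dv2
      simpa using this
    · have h1 : fval a b Fk Fk2 Y ≤ n := by
        have : (0:ℤ) ≤ ((x : ℤ) + (((Y / Fk : ℕ) : ℤ) - z) * Fk2) * a := by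
          have hx0 : (0:ℤ) ≤ (x : ℤ) := by positivity
          have hf0 : (0:ℤ) ≤ (Fk2 : ℤ) := by positivity
          have : (0:ℤ) ≤ (x : ℤ) + (((Y / Fk : ℕ) : ℤ) - z) * Fk2 := by nlinarith
          positivity
        linarith [d1]
      exact le_trans (fval_mod_le ha hab hFk2 hFle hc Y) h1
  · rintro ⟨s, hsa, ⟨t, ht⟩, hle⟩
    have htnn : 0 ≤ t := by
      rcases le_or_gt 0 t with h | h
      · exact h
      · exfalso
        have : (a : ℤ) * t < 0 := by
          have : (0:ℤ) < a := by exact_mod_cast ha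
          exact mul_neg_of_pos_of_neg this h
        linarith
    refine ⟨t.toNat, s % Fk, s / Fk, ?_⟩
    have h2 : ((t.toNat : ℤ)) = t := Int.toNat_of_nonneg htnn
    have hmodZ : ((s % Fk : ℕ) : ℤ) + (Fk : ℤ) * ((s / Fk : ℕ) : ℤ) = (s : ℤ) := by
      exact_mod_cast Nat.mod_add_div s Fk
    rw [h2]
    have : fval a b Fk Fk2 s = ((s % Fk : ℕ) : ℤ) * b + ((s / Fk : ℕ) : ℤ) * c := by
      rw [fval]
      linear_combination (-(b : ℤ)) * hmodZ + (-((s / Fk : ℕ) : ℤ)) * hcz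
    linarith [ht, this]
end aux

lemma rep_finite (a b c : ℕ) (ha : 0 < a) (hb : 0 < b) (hc : 0 < c) (n : ℤ) :
    Finite {v : ℕ × ℕ × ℕ // (v.1 : ℤ) * a + v.2.1 * b + v.2.2 * c = n} := by
  set N := n.toNat with hN
  have hfin : {v : ℕ × ℕ × ℕ | (v.1 : ℤ) * a + v.2.1 * b + v.2.2 * c = n}.Finite := by
    apply Set.Finite.subset (Set.finite_Icc ((0, 0, 0) : ℕ × ℕ × ℕ) (N, N, N))
    rintro ⟨x, y, z⟩ hv
    simp only [Set.mem_setOf_eq] at hv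
    have hxa : (x : ℤ) * a ≤ n := by
      have h1 : (0:ℤ) ≤ (y : ℤ) * b := by positivity
      have h2 : (0:ℤ) ≤ (z : ℤ) * c := by positivity
      linarith
    have hyb : (y : ℤ) * b ≤ n := by
      have h1 : (0:ℤ) ≤ (x : ℤ) * a := by positivity
      have h2 : (0:ℤ) ≤ (z : ℤ) * c := by positivity
      linarith
    have hzc : (z : ℤ) * c ≤ n := by
      have h1 : (0:ℤ) ≤ (x : ℤ) * a := by positivity
      have h2 : (0:ℤ) ≤ (y : ℤ) * b := by positivity
      linarith
    have haZ : (1:ℤ) ≤ a := by exact_mod_cast ha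
    have hbZ : (1:ℤ) ≤ b := by exact_mod_cast hb
    have hcZ : (1:ℤ) ≤ c := by exact_mod_cast hc
    have hx : (x : ℤ) ≤ n := by nlinarith [Int.ofNat_nonneg x]
    have hy : (y : ℤ) ≤ n := by nlinarith [Int.ofNat_nonneg y]
    have hz : (z : ℤ) ≤ n := by nlinarith [Int.ofNat_nonneg z]
    have hn0 : 0 ≤ n := le_trans (by positivity) hxa
    simp only [Set.mem_Icc, Prod.mk_le_mk]
    refine ⟨⟨Nat.zero_le _, Nat.zero_le _, Nat.zero_le _⟩, ?_, ?_, ?_⟩ <;> omega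
  exact hfin.to_subtype

lemma repCount_eq_zero_iff (a b c : ℕ) (ha : 0 < a) (hb : 0 < b) (hc : 0 < c) (n : ℤ) :
    repCount a b c n = 0 ↔ ¬ ∃ x y z : ℕ, (x : ℤ) * a + y * b + z * c = n := by
  have hf := rep_finite a b c ha hb hc n
  rw [repCount, Nat.card_eq_zero]
  constructor
  · rintro (h | h) ⟨x, y, z, hxyz⟩
    · exact h.elim' ⟨(x, y, z), hxyz⟩
    · exact absurd hf h.not_finite
  · intro h
    left
    constructor
    rintro ⟨⟨x, y, z⟩, hv⟩
    exact h ⟨x, y, z, hv⟩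

section aux2
variable {a b Fk Fk2 c : ℕ}
variable (ha : 0 < a) (hab : a < b) (hcop : Nat.Coprime a b) (hFk2 : 0 < Fk2)
variable (hFle : 2 * Fk2 ≤ Fk) (hc : c + Fk2 * a = Fk * b)

include ha hab hcop hFk2 hFle hc in
lemma frob_of_max (s0 : ℕ) (hs0 : s0 < a)
    (hmax : ∀ s, s < a → fval a b Fk Fk2 s ≤ fval a b Fk Fk2 s0) :
    IsPFrob 0 a b c (fval a b Fk Fk2 s0 - a) := by
  have hb : 0 < b := lt_trans ha hab
  have hFk : 0 < Fk := by omega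
  have haZ : (0:ℤ) < a := by exact_mod_cast ha
  have hclb := c_lb ha hab hFk2 hFle hc
  have hcpos : 0 < c := by
    have h1 : (0:ℤ) < c := by
      have h2 : (0:ℤ) < Fk := by exact_mod_cast hFk
      have h3 : (0:ℤ) ≤ (Fk2:ℤ) * a := by positivity
      linarith
    exact_mod_cast h1
  have hcopZ : IsCoprime (a : ℤ) (b : ℤ) := Nat.isCoprime_iff_coprime.mpr hcop
  constructor
  · -- fval s0 - a is not representable
    show repCount a b c (fval a b Fk Fk2 s0 - a) ≤ 0
    rw [Nat.le_zero, repCount_eq_zero_iff a b c ha hb hcpos]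
    intro hrep
    rw [rep_iff ha hab hFk2 hFle hc] at hrep
    obtain ⟨s, hsa, ⟨t, ht⟩, hle⟩ := hrep
    simp only [fval] at ht hle
    have e : ((s0:ℤ) - s) * b =
        (a:ℤ) * (t + 1 + (((s0 / Fk : ℕ):ℤ) - ((s / Fk : ℕ):ℤ)) * Fk2) := by
      linear_combination ht
    have hdvd : (a:ℤ) ∣ ((s0:ℤ) - s) := hcopZ.dvd_of_dvd_mul_right ⟨_, e⟩
    obtain ⟨v, hv⟩ := hdvd
    have hs0s : s0 = s := by
      have h1 : (s0:ℤ) < a := by exact_mod_cast hs0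
      have h2 : (s:ℤ) < a := by exact_mod_cast hsa
      have h3 : (0:ℤ) ≤ (s0:ℤ) := by positivity
      have h4 : (0:ℤ) ≤ (s:ℤ) := by positivity
      have hv0 : v = 0 := by
        rcases lt_trichotomy v 0 with h | h | h
        · exfalso
          have h5 : v ≤ -1 := by omega
          have h6 : (a:ℤ) * v ≤ (a:ℤ) * (-1) := mul_le_mul_of_nonneg_left h5 haZ.le
          linarith
        · exact h
        · exfalso
          have h5 : (1:ℤ) ≤ v := by omega
          have h6 : (a:ℤ) * 1 ≤ (a:ℤ) * v := mul_le_mul_of_nonneg_left h5 haZ.le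
          linarith
      have : (s0:ℤ) = s := by rw [hv0] at hv; linarith
      exact_mod_cast this
    rw [hs0s] at hle
    linarith
  · -- upper bound
    intro n hn
    simp only [Set.mem_setOf_eq, Nat.le_zero] at hn
    rw [repCount_eq_zero_iff a b c ha hb hcpos] at hn
    by_contra hgt
    push_neg at hgt
    apply hn
    rw [rep_iff ha hab hFk2 hFle hc]
    obtain ⟨u, v, huv⟩ := hcopZ
    set sZ := (n * v) % (a:ℤ) with hsZdef
    have hsZ0 : 0 ≤ sZ := Int.emod_nonneg _ (ne_of_gt haZ)
    have hsZa : sZ < a := Int.emod_lt_of_pos _ haZ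
    set s := sZ.toNat with hsdef
    have hsc : (s:ℤ) = sZ := Int.toNat_of_nonneg hsZ0
    have hsa : s < a := by
      have := hsZa; rw [← hsc] at this; exact_mod_cast this
    have hed := Int.emod_add_mul_ediv (n * v) (a:ℤ)
    have d1 : n - (s:ℤ) * b = (a:ℤ) * (n * u + (n * v / a) * b) := by
      rw [hsc]
      linear_combination (-n) * huv - (b:ℤ) * hed
    have hsplit : n - fval a b Fk Fk2 s = (n - (s:ℤ) * b) + ((s / Fk : ℕ):ℤ) * ((Fk2:ℤ) * a) := by
      rw [fval]; ring
    have hdvd2 : (a:ℤ) ∣ n - fval a b Fk Fk2 s := by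
      rw [hsplit]
      exact dvd_add ⟨_, d1⟩ ⟨((s / Fk : ℕ):ℤ) * Fk2, by ring⟩
    refine ⟨s, hsa, hdvd2, ?_⟩
    obtain ⟨t, htt⟩ := hdvd2
    have h1 : fval a b Fk Fk2 s ≤ fval a b Fk Fk2 s0 := hmax s hsa
    have htnn : 0 ≤ t := by
      rcases le_or_gt 0 t with h | h
      · exact h
      · exfalso
        have h5 : t ≤ -1 := by omega
        have h6 : (a:ℤ) * t ≤ (a:ℤ) * (-1) := by
          apply mul_le_mul_of_nonneg_left h5 (le_of_lt haZ)
        linarith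
    nlinarith
end aux2

lemma div_pred (r Fk : ℕ) (hr : 1 ≤ r) (hFk : 0 < Fk) : (r * Fk - 1) / Fk = r - 1 := by
  obtain ⟨r', rfl⟩ : ∃ r', r = r' + 1 := ⟨r - 1, by omega⟩
  have h0 : (r' + 1) * Fk = r' * Fk + Fk := by ring
  have h1 : (r' + 1) * Fk - 1 = Fk - 1 + r' * Fk := by
    generalize hA : r' * Fk = A at h0 ⊢
    generalize hB : (r' + 1) * Fk = B at h0 ⊢
    omega
  rw [h1, Nat.add_mul_div_right _ _ hFk, Nat.div_eq_of_lt (by omega)]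
  omega

section aux3
variable {a b Fk Fk2 c : ℕ}
variable (ha : 0 < a) (hab : a < b) (hcop : Nat.Coprime a b) (hFk2 : 0 < Fk2)
variable (hFle : 2 * Fk2 ≤ Fk) (hc : c + Fk2 * a = Fk * b)

include ha hFk2 hFle in
lemma fval_E1 : fval a b Fk Fk2 (a - 1)
    = ((a:ℤ) - 1) * b - (((a - 1) / Fk : ℕ):ℤ) * ((Fk2:ℤ) * a) := by
  rw [fval]
  have h1 : ((a - 1 : ℕ):ℤ) = (a:ℤ) - 1 := by omega
  rw [h1]

include hFk2 hFle in
lemma fval_E2 (hr1 : 1 ≤ (a - 1) / Fk) :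
    fval a b Fk Fk2 ((a - 1) / Fk * Fk - 1)
      = ((((a - 1) / Fk : ℕ):ℤ) * Fk - 1) * b
        - ((((a - 1) / Fk : ℕ):ℤ) - 1) * ((Fk2:ℤ) * a) := by
  have hFk : 0 < Fk := by omega
  rw [fval, div_pred _ _ hr1 hFk]
  have h1 : 1 ≤ (a - 1) / Fk * Fk := Nat.mul_le_mul hr1 hFk
  have c1 : (((a - 1) / Fk * Fk - 1 : ℕ):ℤ) = (((a - 1) / Fk : ℕ):ℤ) * Fk - 1 := by
    push_cast [Nat.cast_sub h1]
    ring
  have c2 : (((a - 1) / Fk - 1 : ℕ):ℤ) = (((a - 1) / Fk : ℕ):ℤ) - 1 := by omega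
  rw [c1, c2]

include ha hab hFk2 hFle hc in
lemma fval_le_cases (s : ℕ) (hsa : s < a) :
    fval a b Fk Fk2 s ≤ fval a b Fk Fk2 (a - 1) ∨
      (1 ≤ (a - 1) / Fk ∧ fval a b Fk Fk2 s ≤ fval a b Fk Fk2 ((a - 1) / Fk * Fk - 1)) := by
  have hFk : 0 < Fk := by omega
  have hcz : (c : ℤ) + Fk2 * a = Fk * b := by exact_mod_cast hc
  have hs1 : s ≤ a - 1 := by omega
  have hqr : s / Fk ≤ (a - 1) / Fk := Nat.div_le_div_right hs1
  rcases Nat.eq_or_lt_of_le hqr with heq | hlt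
  · left
    rw [fval, fval, heq]
    have h2 : (s:ℤ) ≤ ((a - 1 : ℕ):ℤ) := by exact_mod_cast hs1
    have hbZ : (0:ℤ) ≤ b := by positivity
    nlinarith
  · right
    have hr1 : 1 ≤ (a - 1) / Fk := lt_of_le_of_lt (Nat.zero_le _) hlt
    refine ⟨hr1, ?_⟩
    have hdm := Nat.div_add_mod s Fk
    have hml := Nat.mod_lt s hFk
    have hslt : s + 1 ≤ (s / Fk + 1) * Fk := by
      have h3 : (s / Fk + 1) * Fk = Fk * (s / Fk) + Fk := by ring
      generalize hA : Fk * (s / Fk) = A at hdm h3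
      generalize hB : (s / Fk + 1) * Fk = B at h3 ⊢
      omega
    rw [fval, fval_E2 hFk2 hFle hr1]
    have hA : ((s:ℤ) + 1) ≤ (((s / Fk : ℕ):ℤ) + 1) * Fk := by exact_mod_cast hslt
    have hB : ((s / Fk : ℕ):ℤ) + 1 ≤ (((a - 1) / Fk : ℕ):ℤ) := by exact_mod_cast hlt
    have hC : (0:ℤ) ≤ (Fk:ℤ) * b - Fk2 * a := by
      have : (0:ℤ) ≤ c := by positivity
      linarith
    have hb0 : (0:ℤ) ≤ b := by positivity
    have P1 : (0:ℤ) ≤ ((((s / Fk : ℕ):ℤ) + 1) * Fk - 1 - s) * b :=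
      mul_nonneg (by linarith) hb0
    have P2 : (0:ℤ) ≤ ((((a - 1) / Fk : ℕ):ℤ) - ((s / Fk : ℕ):ℤ) - 1) * ((Fk:ℤ) * b - Fk2 * a) :=
      mul_nonneg (by linarith) hC
    nlinarith [P1, P2]

include ha hab hcop hFk2 hFle hc in
lemma frob_case1
    (hcond : (a - 1) / Fk = 0 ∨ (1 ≤ (a - 1) / Fk ∧
      (Fk2 : ℤ) * a < ((a:ℤ) - (((a - 1) / Fk : ℕ):ℤ) * Fk) * b)) :
    IsPFrob 0 a b c (((a:ℤ) - 1) * b - (a:ℤ) * ((((a - 1) / Fk : ℕ):ℤ) * Fk2 + 1)) := by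
  have hgoal : ((a:ℤ) - 1) * b - (a:ℤ) * ((((a - 1) / Fk : ℕ):ℤ) * Fk2 + 1)
      = fval a b Fk Fk2 (a - 1) - a := by
    rw [fval_E1 ha hFk2 hFle]; ring
  rw [hgoal]
  apply frob_of_max ha hab hcop hFk2 hFle hc (a - 1) (by omega)
  intro s hsa
  rcases fval_le_cases ha hab hFk2 hFle hc s hsa with h | ⟨hr1, h⟩
  · exact h
  · refine le_trans h ?_
    rcases hcond with h0 | ⟨_, hstrict⟩
    · exact absurd h0 (by omega)
    · rw [fval_E1 ha hFk2 hFle, fval_E2 hFk2 hFle hr1]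
      nlinarith [hstrict]

include ha hab hcop hFk2 hFle hc in
lemma frob_case2
    (hcond : ¬ ((a - 1) / Fk = 0 ∨ (1 ≤ (a - 1) / Fk ∧
      (Fk2 : ℤ) * a < ((a:ℤ) - (((a - 1) / Fk : ℕ):ℤ) * Fk) * b))) :
    IsPFrob 0 a b c (((((a - 1) / Fk : ℕ):ℤ) * Fk - 1) * b
      - (a:ℤ) * (((((a - 1) / Fk : ℕ):ℤ) - 1) * Fk2 + 1)) := by
  push_neg at hcond
  obtain ⟨hr0, himp⟩ := hcond
  have hr1 : 1 ≤ (a - 1) / Fk := Nat.one_le_iff_ne_zero.mpr hr0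
  have hle := himp hr1
  have hFk : 0 < Fk := by omega
  have hgoal : ((((a - 1) / Fk : ℕ):ℤ) * Fk - 1) * b
      - (a:ℤ) * (((((a - 1) / Fk : ℕ):ℤ) - 1) * Fk2 + 1)
      = fval a b Fk Fk2 ((a - 1) / Fk * Fk - 1) - a := by
    rw [fval_E2 hFk2 hFle hr1]; ring
  rw [hgoal]
  have hs0 : (a - 1) / Fk * Fk - 1 < a := by
    have h := Nat.div_mul_le_self (a - 1) Fk
    exact lt_of_le_of_lt (Nat.sub_le_sub_right h 1) (by omega)
  apply frob_of_max ha hab hcop hFk2 hFle hc _ hs0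
  intro s hsa
  rcases fval_le_cases ha hab hFk2 hFle hc s hsa with h | ⟨_, h⟩
  · refine le_trans h ?_
    rw [fval_E1 ha hFk2 hFle, fval_E2 hFk2 hFle hr1]
    nlinarith [hle]
  · exact h
end aux3

theorem stmt3 (i k : ℕ) (hi : 3 ≤ i) (hk : 3 ≤ k) :
    letI L := lucas
    letI F := Nat.fib
    letI r := (L i - 1) / F k
    IsPFrob 0 (L i) (L (i + 2)) (L (i + k))
      (if r = 0 ∨ (1 ≤ r ∧ (F (k - 2) : ℤ) * L i < ((L i : ℤ) - r * F k) * L (i + 2)) then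
        ((L i : ℤ) - 1) * L (i + 2) - (L i : ℤ) * (r * F (k - 2) + 1)
      else
        ((r : ℤ) * F k - 1) * L (i + 2) - (L i : ℤ) * (((r : ℤ) - 1) * F (k - 2) + 1)) := by
  obtain ⟨m, rfl⟩ : ∃ m, k = m + 2 := ⟨k - 2, by omega⟩
  have hm1 : 1 ≤ m := by omega
  have ha : 0 < lucas i := lucas_pos i
  have hab : lucas i < lucas (i + 2) := by
    have h1 := lucas_pos (i + 1)
    have h2 : lucas (i + 2) = lucas i + lucas (i + 1) := rfl
    omega
  have hcop := lucas_coprime i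
  have hFk2 : 0 < Nat.fib m := Nat.fib_pos.mpr hm1
  have hFle : 2 * Nat.fib m ≤ Nat.fib (m + 2) := by
    have h1 := Nat.fib_le_fib_succ (n := m)
    have h2 : Nat.fib (m + 2) = Nat.fib m + Nat.fib (m + 1) := Nat.fib_add_two
    omega
  have hc : lucas (i + (m + 2)) + Nat.fib m * lucas i = Nat.fib (m + 2) * lucas (i + 2) :=
    lucas_fib i m
  simp only [Nat.add_sub_cancel]
  by_cases hcond : ((lucas i - 1) / Nat.fib (m + 2) = 0 ∨
      (1 ≤ (lucas i - 1) / Nat.fib (m + 2) ∧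
        (Nat.fib m : ℤ) * lucas i <
          ((lucas i : ℤ) - (((lucas i - 1) / Nat.fib (m + 2) : ℕ) : ℤ) * Nat.fib (m + 2)) *
            lucas (i + 2)))
  · rw [if_pos hcond]
    exact frob_case1 ha hab hcop hFk2 hFle hc hcond
  · rw [if_neg hcond]
    exact frob_case2 ha hab hcop hFk2 hFle hc hcond
end

section
/- For integers i ≥ 3 and k ≥ i + 2, the 1-Frobenius number of the triple (F_i, F_{i+2}, F_{i+k}) equals (2·F_i − 1)·F_{i+2} − F_i. -/
/-! For coprime `a, b`, every `n > 2ab - a - b` has `n - ab = xa + yb` with `x, y ≥ 0`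
(Sylvester), hence the two representations `(x + b)a + yb = xa + (y + a)b = n`; whereas
`2ab - a - b = (b - 1)a + (a - 1)b` is the only representation by `a, b`, since `b ∣ x + 1` and
`a ∣ y + 1`. A third generator `c > 2ab - a - b` cannot occur in it, so `g₁(a, b, c) = 2ab - a - b`.
For `a = F_i`, `b = F_{i+2} = F_i + F_{i+1}` coprimality is that of consecutive Fibonacci numbers,
and `F_{i+k} ≥ F_{2i+2} = F_i F_{i+1} + F_{i+1} F_{i+2}` exceeds `2ab - a - b`. -/

open Nat

section Representations

variable {a b c : ℕ}

theorem exists_nat_combination_of_frobenius_lt (hab : a.Coprime b) (hb : 0 < b) {n : ℤ}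
    (hn : (a * b - a - b : ℤ) < n) : ∃ x y : ℕ, (x * a + y * b : ℤ) = n := by
  obtain ⟨u, v, huv⟩ := Nat.isCoprime_iff_coprime.2 hab
  have hb' : (0 : ℤ) < b := by exact_mod_cast hb
  set x := n * u % b
  set y := n * u / b * a + n * v
  have hx : 0 ≤ x := Int.emod_nonneg _ hb'.ne'
  have hxb : x < b := Int.emod_lt_of_pos _ hb'
  have hxy : x * a + b * y = n := by
    linear_combination (a : ℤ) * Int.mul_ediv_add_emod (n * u) b + n * huv
  -- `b * y = n - x * a > a * b - a - b - (b - 1) * a = -b`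
  have hy : 0 ≤ y := by
    by_contra! hy
    nlinarith [mul_le_mul_of_nonneg_right (Int.le_sub_one_of_lt hxb) (Int.natCast_nonneg a)]
  exact ⟨x.toNat, y.toNat, by rw [Int.toNat_of_nonneg hx, Int.toNat_of_nonneg hy]; linarith⟩

theorem add_one_eq_of_mul_add_mul_eq (hab : a.Coprime b) (ha : 0 < a) (hb : 0 < b) {x y : ℕ}
    (h : (x * a + y * b : ℤ) = 2 * a * b - a - b) : x + 1 = b ∧ y + 1 = a := by
  have hab' := Nat.isCoprime_iff_coprime.2 hab
  obtain ⟨t, ht⟩ : (b : ℤ) ∣ x + 1 :=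
    hab'.symm.dvd_of_dvd_mul_right ⟨2 * a - (y + 1), by linear_combination h⟩
  obtain ⟨s, hs⟩ : (a : ℤ) ∣ y + 1 :=
    hab'.dvd_of_dvd_mul_right ⟨2 * b - (x + 1), by linear_combination h⟩
  have ht0 : 0 < t := by nlinarith
  have hs0 : 0 < s := by nlinarith
  have hsum : (a * b : ℤ) * (t + s) = a * b * 2 := by linear_combination h - a * ht - b * hs
  have hts : t + s = 2 := mul_left_cancel₀ (by positivity) hsum
  obtain rfl : t = 1 := by omega
  obtain rfl : s = 1 := by omega
  constructor <;> linarith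

theorem finite_reps (ha : 0 < a) (hb : 0 < b) (hc : 0 < c) (n : ℤ) :
    Finite {v : ℕ × ℕ × ℕ // (v.1 : ℤ) * a + v.2.1 * b + v.2.2 * c = n} := by
  refine Set.Finite.to_subtype <| (Set.finite_Iic (n.toNat, n.toNat, n.toNat)).subset ?_
  rintro ⟨x, y, z⟩ (h : (x : ℤ) * a + y * b + z * c = n)
  have hx : (x : ℤ) ≤ x * a := le_mul_of_one_le_right (by positivity) (by exact_mod_cast ha)
  have hy : (y : ℤ) ≤ y * b := le_mul_of_one_le_right (by positivity) (by exact_mod_cast hb)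
  have hz : (z : ℤ) ≤ z * c := le_mul_of_one_le_right (by positivity) (by exact_mod_cast hc)
  simp only [Set.mem_Iic, Prod.mk_le_mk]
  omega

theorem one_lt_repCount (hab : a.Coprime b) (ha : 0 < a) (hb : 0 < b) (hc : 0 < c) {n : ℤ}
    (hn : (2 * a * b - a - b : ℤ) < n) : 1 < repCount a b c n := by
  obtain ⟨x, y, hxy⟩ := exists_nat_combination_of_frobenius_lt hab hb (n := n - a * b) (by linarith)
  have := finite_reps ha hb hc n
  have : Nontrivial {v : ℕ × ℕ × ℕ // (v.1 : ℤ) * a + v.2.1 * b + v.2.2 * c = n} :=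
    nontrivial_of_ne ⟨(x + b, y, 0), by push_cast; linarith⟩ ⟨(x, y + a, 0), by push_cast; linarith⟩
      (by simp only [ne_eq, Subtype.mk.injEq, Prod.mk.injEq]; omega)
  exact Finite.one_lt_card

theorem repCount_le_one (hab : a.Coprime b) (ha : 0 < a) (hb : 0 < b)
    (hc : (2 * a * b - a - b : ℤ) < c) : repCount a b c (2 * a * b - a - b) ≤ 1 := by
  have eq_of_rep {x y z : ℕ} (h : (x * a + y * b + z * c : ℤ) = 2 * a * b - a - b) :
      x + 1 = b ∧ y + 1 = a ∧ z = 0 := by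
    obtain rfl : z = 0 := by
      by_contra! hz
      have hz : (c : ℤ) ≤ z * c :=
        le_mul_of_one_le_left (Int.natCast_nonneg c) (by exact_mod_cast Nat.one_le_iff_ne_zero.2 hz)
      have : (0 : ℤ) ≤ x * a + y * b := by positivity
      linarith
    exact (add_one_eq_of_mul_add_mul_eq hab ha hb (by simpa using h)).imp_right (⟨·, rfl⟩)
  have : Subsingleton
      {v : ℕ × ℕ × ℕ // (v.1 : ℤ) * a + v.2.1 * b + v.2.2 * c = 2 * a * b - a - b} := by
    refine ⟨fun ⟨⟨x, y, z⟩, h⟩ ⟨⟨x', y', z'⟩, h'⟩ => ?_⟩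
    dsimp only at h h'
    obtain ⟨hx, hy, rfl⟩ := eq_of_rep h
    obtain ⟨hx', hy', rfl⟩ := eq_of_rep h'
    obtain rfl : x = x' := by omega
    obtain rfl : y = y' := by omega
    rfl
  exact Finite.card_le_one_iff_subsingleton.2 this

theorem isPFrob_one_of_coprime (hab : a.Coprime b) (ha : 0 < a) (hb : 0 < b)
    (hc : (2 * a * b - a - b : ℤ) < c) : IsPFrob 1 a b c (2 * a * b - a - b) := by
  have hc0 : 0 < c := by
    have : (0 : ℤ) ≤ 2 * a * b - a - b := by nlinarith [Int.natCast_pos.2 ha, Int.natCast_pos.2 hb]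
    omega
  refine ⟨repCount_le_one hab ha hb hc, fun n hn => ?_⟩
  by_contra! hlt
  exact absurd hn (not_le.2 (one_lt_repCount hab ha hb hc0 hlt))

end Representations

theorem Nat.coprime_fib_fib_add_two (n : ℕ) : (fib n).Coprime (fib (n + 2)) := by
  rw [fib_add_two, coprime_self_add_right]
  exact fib_coprime_fib_succ n

theorem Nat.two_mul_fib_mul_fib_add_two_lt (n : ℕ) :
    2 * fib n * fib (n + 2) < fib (2 * n + 2) + fib n + fib (n + 2) := by
  match n with
  | 0 | 1 => decide
  | m + 2 =>
    show 2 * fib (m + 2) * fib (m + 4) < fib (2 * (m + 2) + 2) + fib (m + 2) + fib (m + 4)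
    have h : fib (2 * (m + 2) + 2) = fib (m + 2) * fib (m + 3) + fib (m + 3) * fib (m + 4) := by
      rw [← fib_add]; ring_nf
    have h₁ : fib (m + 2) ≤ 2 * fib (m + 1) := by
      rw [fib_add_two]; linarith [fib_le_fib_succ (n := m)]
    rw [h, fib_add_two (n := m + 2), fib_add_two (n := m + 1)]
    nlinarith [Nat.mul_le_mul_left (fib (m + 2)) h₁, fib_pos.2 (show 0 < m + 2 by omega)]

theorem stmt4 (i k : ℕ) (hi : 3 ≤ i) (hk : i + 2 ≤ k) :
    letI F := Nat.fib
    IsPFrob 1 (F i) (F (i + 2)) (F (i + k))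
      ((2 * (F i : ℤ) - 1) * F (i + 2) - F i) := by
  have hc : 2 * fib i * fib (i + 2) < fib (i + k) + fib i + fib (i + 2) :=
    (two_mul_fib_mul_fib_add_two_lt i).trans_le <| by
      have := fib_mono (show 2 * i + 2 ≤ i + k by omega)
      omega
  convert isPFrob_one_of_coprime (coprime_fib_fib_add_two i) (fib_pos.2 (by omega))
    (fib_pos.2 (by omega)) (by zify at hc; linarith) using 1
  ring
end

section
/- For every integer i ≥ 3, the 1-Frobenius number of (F_i, F_{i+2}, F_{2i+1}) equals (F_{i−2} − 1)·F_{i+2} + F_{2i+1} − F_i. -/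
set_option maxHeartbeats 1000000

section Aux

variable {P Q : ℤ}

lemma aux_unique (hP1 : 1 ≤ P) (hPQ : P ≤ Q)
    (hcop : IsCoprime (P + Q) (2*P + 3*Q)) (x y z : ℤ)
    (hx0 : 0 ≤ x) (hy0 : 0 ≤ y) (hz0 : 0 ≤ z)
    (heq : x * (P + Q) + y * (2*P + 3*Q) + z * ((P+Q)^2 + (P+2*Q)^2)
      = (P - 1) * (2*P + 3*Q) + ((P+Q)^2 + (P+2*Q)^2) - (P + Q)) :
    x = (2*P + 3*Q) - Q - 1 ∧ y = (P + Q) - 1 ∧ z = 0 := by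
  have hzle : z ≤ 1 := by nlinarith
  interval_cases z
  · -- z = 0
    refine ⟨?_, ?_, rfl⟩ <;>
    · have hrel : ((P + Q) - 1 - y) * (2*P + 3*Q) = (x - ((2*P + 3*Q) - Q - 1)) * (P + Q) := by
        nlinarith
      have hdvd : (P + Q) ∣ ((P + Q) - 1 - y) :=
        hcop.dvd_of_dvd_mul_right ⟨x - ((2*P + 3*Q) - Q - 1), by linarith⟩
      have hylt : y < 2 * (P + Q) - 1 := by nlinarith
      obtain ⟨k, hk⟩ := hdvd
      have hk0 : k = 0 := by
        rcases lt_trichotomy k 0 with h | h | h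
        · have hk1 : k ≤ -1 := by omega
          nlinarith
        · exact h
        · have hk1 : 1 ≤ k := by omega
          nlinarith
      have hy : y = (P + Q) - 1 := by rw [hk0, mul_zero] at hk; linarith
      first
      | (rw [hy] at hrel
         have hxx : (x - ((2*P + 3*Q) - Q - 1)) * (P + Q) = 0 := by linarith
         have := mul_eq_zero.mp hxx
         rcases this with h | h
         · linarith
         · linarith)
      | exact hy
  · -- z = 1
    exfalso
    have hrel : ((P - 1) - y) * (2*P + 3*Q) = (x + 1) * (P + Q) := by nlinarith
    have hpos : 0 < (x + 1) * (P + Q) := mul_pos (by linarith) (by linarith)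
    have hy' : 0 < (P - 1) - y := by nlinarith
    have hdvd : (P + Q) ∣ ((P - 1) - y) := hcop.dvd_of_dvd_mul_right ⟨x + 1, by linarith⟩
    have hlb := Int.le_of_dvd hy' hdvd
    linarith

lemma aux_b1 (hP1 : 1 ≤ P) (hPQ : P ≤ Q) :
    ((P + Q) - 1) * (2*P + 3*Q) ≤ (P - 1) * (2*P + 3*Q) + ((P+Q)^2 + (P+2*Q)^2) - (P + Q) := by
  nlinarith

lemma aux_b2 (hP1 : 1 ≤ P) (hPQ : P ≤ Q) (hQ2 : Q ≤ 2 * P) :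
    (Q - 1 + (P + Q)) * (2*P + 3*Q)
      ≤ (P - 1) * (2*P + 3*Q) + ((P+Q)^2 + (P+2*Q)^2) - (P + Q) + 1 := by
  nlinarith

lemma aux_b3 (hP1 : 1 ≤ P) (hPQ : P ≤ Q) :
    ((P + Q) - 2 - Q) * (2*P + 3*Q) + ((P+Q)^2 + (P+2*Q)^2)
      ≤ (P - 1) * (2*P + 3*Q) + ((P+Q)^2 + (P+2*Q)^2) - (P + Q) + 1 := by
  nlinarith

lemma aux_b4 :
    ((P + Q) - 1 - Q) * (2*P + 3*Q) + ((P+Q)^2 + (P+2*Q)^2)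
      = (P - 1) * (2*P + 3*Q) + ((P+Q)^2 + (P+2*Q)^2) - (P + Q) + (P + Q) := by
  ring

lemma aux_CQB : ((P+Q)^2 + (P+2*Q)^2) - Q * (2*P + 3*Q) = 2 * (P + Q)^2 := by ring

end Aux

lemma fin_sols (a b c : ℕ) (ha : 1 ≤ a) (hb : 1 ≤ b) (hc : 1 ≤ c) (n : ℤ) :
    Finite {v : ℕ × ℕ × ℕ // (v.1 : ℤ) * a + v.2.1 * b + v.2.2 * c = n} := by
  have ha' : (1:ℤ) ≤ a := by exact_mod_cast ha
  have hb' : (1:ℤ) ≤ b := by exact_mod_cast hb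
  have hc' : (1:ℤ) ≤ c := by exact_mod_cast hc
  have hsub : {v : ℕ × ℕ × ℕ | (v.1 : ℤ) * a + v.2.1 * b + v.2.2 * c = n} ⊆
      Set.Iic n.toNat ×ˢ (Set.Iic n.toNat ×ˢ Set.Iic n.toNat) := by
    rintro ⟨x, y, z⟩ h
    simp only [Set.mem_setOf_eq] at h
    have h0x : (0:ℤ) ≤ x := Int.natCast_nonneg x
    have h0y : (0:ℤ) ≤ y := Int.natCast_nonneg y
    have h0z : (0:ℤ) ≤ z := Int.natCast_nonneg z
    have hx : (x : ℤ) ≤ n := by nlinarith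
    have hy : (y : ℤ) ≤ n := by nlinarith
    have hz : (z : ℤ) ≤ n := by nlinarith
    simp only [Set.mem_prod, Set.mem_Iic]
    refine ⟨?_, ?_, ?_⟩ <;> omega
  have hfin : Set.Finite {v : ℕ × ℕ × ℕ | (v.1 : ℤ) * a + v.2.1 * b + v.2.2 * c = n} :=
    Set.Finite.subset ((Set.finite_Iic _).prod ((Set.finite_Iic _).prod (Set.finite_Iic _))) hsub
  exact hfin.to_subtype

theorem stmt5 (i : ℕ) (hi : 3 ≤ i) :
    letI F := Nat.fib
    IsPFrob 1 (F i) (F (i + 2)) (F (2 * i + 1))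
      (((F (i - 2) : ℤ) - 1) * F (i + 2) + F (2 * i + 1) - F i) := by
  obtain ⟨j, rfl⟩ : ∃ j, i = j + 3 := ⟨i - 3, by omega⟩
  show IsPFrob 1 (Nat.fib (j+3)) (Nat.fib (j+3+2)) (Nat.fib (2*(j+3)+1))
      (((Nat.fib (j+3-2) : ℤ) - 1) * Nat.fib (j+3+2) + Nat.fib (2*(j+3)+1) - Nat.fib (j+3))
  have e5 : j + 3 + 2 = j + 5 := by ring
  have e7 : 2 * (j + 3) + 1 = j + 3 + (j + 3) + 1 := by ring
  have e1 : j + 3 - 2 = j + 1 := by omega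
  rw [e5, e7, e1]
  -- fib recurrences at nat level (defeq index juggling)
  have g3 : Nat.fib (j+3) = Nat.fib (j+1) + Nat.fib (j+2) := Nat.fib_add_two
  have g4' : Nat.fib (j+4) = Nat.fib (j+2) + Nat.fib (j+3) := Nat.fib_add_two
  have g5' : Nat.fib (j+5) = Nat.fib (j+3) + Nat.fib (j+4) := Nat.fib_add_two
  have g5 : Nat.fib (j+5) = 2 * Nat.fib (j+1) + 3 * Nat.fib (j+2) := by omega
  have g7 : Nat.fib (j+3+(j+3)+1)
      = Nat.fib (j+3) * Nat.fib (j+3) + Nat.fib (j+4) * Nat.fib (j+4) :=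
    Nat.fib_add (j+3) (j+3)
  have f2 : Nat.fib (j+2) = Nat.fib j + Nat.fib (j+1) := Nat.fib_add_two
  have hfj : Nat.fib j ≤ Nat.fib (j+1) := Nat.fib_le_fib_succ
  have hfj1 : Nat.fib (j+1) ≤ Nat.fib (j+2) := Nat.fib_le_fib_succ
  have hf1 : 1 ≤ Nat.fib (j+1) := Nat.fib_pos.mpr (by omega)
  set p := Nat.fib (j+1) with hp
  set q := Nat.fib (j+2) with hq
  set an := Nat.fib (j + 3) with han
  set bn := Nat.fib (j + 5) with hbn
  set cn := Nat.fib (j + 3 + (j + 3) + 1) with hcn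
  set P : ℤ := (p : ℤ) with hPdef
  set Q : ℤ := (q : ℤ) with hQdef
  have hP1 : 1 ≤ P := by rw [hPdef]; exact_mod_cast hf1
  have hPQ : P ≤ Q := by rw [hPdef, hQdef]; exact_mod_cast hfj1
  have hQ2 : Q ≤ 2 * P := by
    have h2 : q ≤ 2 * p := by omega
    rw [hPdef, hQdef]; exact_mod_cast h2
  have hA : (an : ℤ) = P + Q := by rw [g3]; push_cast; ring
  have hB : (bn : ℤ) = 2*P + 3*Q := by rw [g5]; push_cast; ring
  have hC : (cn : ℤ) = (P+Q)^2 + (P+2*Q)^2 := by rw [g7, g4', g3]; push_cast; ring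
  have hApos : (0:ℤ) < an := by rw [hA]; linarith
  have hBpos : (0:ℤ) < bn := by rw [hB]; linarith
  have hCpos : (0:ℤ) < cn := by rw [hC]; nlinarith
  have han1 : 1 ≤ an := by exact_mod_cast hApos
  have hbn1 : 1 ≤ bn := by exact_mod_cast hBpos
  have hcn1 : 1 ≤ cn := by exact_mod_cast hCpos
  have hcop : Nat.Coprime an bn := by
    have hg := Nat.fib_gcd (j+3) (j+5)
    have hd : Nat.gcd (j+3) (j+5) ∣ 2 := by
      have h1 := Nat.gcd_dvd_left (j+3) (j+5)
      have h2 := Nat.gcd_dvd_right (j+3) (j+5)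
      have h3 := Nat.dvd_sub h2 h1
      simpa using h3
    have h0 : Nat.gcd (j+3) (j+5) ≠ 0 := by
      intro h; have := Nat.eq_zero_of_gcd_eq_zero_left h; omega
    have hcases : Nat.gcd (j+3) (j+5) = 1 ∨ Nat.gcd (j+3) (j+5) = 2 := by
      have hle := Nat.le_of_dvd (by norm_num) hd
      rcases Nat.lt_or_ge (Nat.gcd (j+3) (j+5)) 2 with h | h
      · left; omega
      · right; omega
    unfold Nat.Coprime
    rw [han, hbn, ← hg]
    rcases hcases with h | h <;> rw [h] <;> rfl
  have hcopZ : IsCoprime ((an : ℤ)) ((bn : ℤ)) := by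
    rw [Int.isCoprime_iff_gcd_eq_one]
    simpa using hcop
  have hcopZ' : IsCoprime (P + Q) (2*P + 3*Q) := by rw [← hA, ← hB]; exact hcopZ
  set G : ℤ := ((Nat.fib (j+1) : ℤ) - 1) * (bn:ℤ) + (cn:ℤ) - (an:ℤ) with hGdef
  have hGpq : G = (P - 1) * (2*P + 3*Q) + ((P+Q)^2 + (P+2*Q)^2) - (P + Q) := by
    rw [hGdef, hA, hB, hC, hPdef, hp]
  constructor
  · -- membership : repCount an bn cn G ≤ 1
    show repCount an bn cn G ≤ 1
    unfold repCount
    haveI : Finite {v : ℕ × ℕ × ℕ // (v.1 : ℤ) * an + v.2.1 * bn + v.2.2 * cn = G} :=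
      fin_sols an bn cn han1 hbn1 hcn1 G
    rw [Finite.card_le_one_iff_subsingleton]
    constructor
    rintro ⟨⟨x1, y1, z1⟩, h1⟩ ⟨⟨x2, y2, z2⟩, h2⟩
    have key : ∀ x y z : ℕ, (x : ℤ) * an + y * bn + z * cn = G →
        (x : ℤ) = (2*P + 3*Q) - Q - 1 ∧ (y : ℤ) = (P + Q) - 1 ∧ (z : ℤ) = 0 := by
      intro x y z hxyz
      rw [hA, hB, hC, hGpq] at hxyz
      exact aux_unique hP1 hPQ hcopZ' x y z (Int.natCast_nonneg x) (Int.natCast_nonneg y)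
        (Int.natCast_nonneg z) hxyz
    obtain ⟨ha1, hb1', hc1⟩ := key x1 y1 z1 h1
    obtain ⟨ha2, hb2', hc2⟩ := key x2 y2 z2 h2
    have hxe : x1 = x2 := by exact_mod_cast ha1.trans ha2.symm
    have hye : y1 = y2 := by exact_mod_cast hb1'.trans hb2'.symm
    have hze : z1 = z2 := by
      have hz12 : (z1:ℤ) = z2 := hc1.trans hc2.symm
      exact_mod_cast hz12
    subst hxe; subst hye; subst hze
    rfl
  · -- upper bound
    rintro n hn
    simp only [Set.mem_setOf_eq] at hn
    by_contra hlt
    push_neg at hlt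
    obtain ⟨u, v, huv⟩ := hcopZ
    have hApos' : (0:ℤ) < (an:ℤ) := hApos
    set y0 : ℤ := (n * v) % (an:ℤ) with hy0def
    have hy0lb : 0 ≤ y0 := Int.emod_nonneg _ (ne_of_gt hApos')
    have hy0ub : y0 < (an:ℤ) := Int.emod_lt_of_pos _ hApos'
    have hdvd1 : ((an:ℤ)) ∣ n - y0 * bn := by
      have h1 : n * v - y0 = (an:ℤ) * (n * v / an) := by
        rw [hy0def, Int.emod_def]; ring
      have h2 : n - y0 * bn = n * (u * an + v * bn) - y0 * bn := by rw [huv]; ring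
      rw [h2, show n * (u * (an:ℤ) + v * bn) - y0 * bn
          = (n * u) * an + (n * v - y0) * bn from by ring, h1]
      exact ⟨n * u + n * v / an * bn, by ring⟩
    obtain ⟨x1, hx1⟩ := hdvd1
    have hng : G + 1 ≤ n := by omega
    have hb1 : ((an:ℤ) - 1) * bn ≤ G := by
      rw [hGpq, hA, hB]; exact aux_b1 hP1 hPQ
    have hx1nn : 0 ≤ x1 := by
      have h1 : y0 * bn ≤ ((an:ℤ) - 1) * bn :=
        mul_le_mul_of_nonneg_right (by omega) hBpos.le
      have h3 : 0 ≤ (an:ℤ) * x1 := by rw [← hx1]; linarith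
      exact nonneg_of_mul_nonneg_right h3 hApos'
    haveI : Finite {w : ℕ × ℕ × ℕ // (w.1 : ℤ) * an + w.2.1 * bn + w.2.2 * cn = n} :=
      fin_sols an bn cn han1 hbn1 hcn1 n
    have hv1 : ((x1.toNat : ℤ)) * an + (y0.toNat : ℤ) * bn + ((0:ℕ) : ℤ) * cn = n := by
      rw [Int.toNat_of_nonneg hx1nn, Int.toNat_of_nonneg hy0lb]
      push_cast
      linarith [hx1]
    have hsecond : ∃ x2' y2' z2' : ℕ,
        ((x2' : ℤ)) * an + (y2' : ℤ) * bn + (z2' : ℤ) * cn = n ∧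
        ((y2' : ℤ) ≠ y0 ∨ z2' ≠ 0) := by
      by_cases hcase : y0 ≤ Q - 1
      · -- use (x1 - bn, y0 + an, 0)
        have hnb : (y0 + an) * bn ≤ n := by
          have h1 : (y0 + (an:ℤ)) * bn ≤ (Q - 1 + an) * bn :=
            mul_le_mul_of_nonneg_right (by linarith) hBpos.le
          have h2 : (Q - 1 + (an:ℤ)) * bn ≤ G + 1 := by
            rw [hGpq, hA, hB]; exact aux_b2 hP1 hPQ hQ2
          linarith
        have hx2eq : (an:ℤ) * (x1 - bn) = n - (y0 + an) * bn := by
          rw [show n - (y0 + (an:ℤ)) * bn = (n - y0 * bn) - an * bn from by ring, hx1]; ring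
        have hx2nn : 0 ≤ x1 - (bn:ℤ) := by
          have h3 : 0 ≤ (an:ℤ) * (x1 - bn) := by rw [hx2eq]; linarith
          exact nonneg_of_mul_nonneg_right h3 hApos'
        refine ⟨(x1 - (bn:ℤ)).toNat, (y0 + (an:ℤ)).toNat, 0, ?_, ?_⟩
        · rw [Int.toNat_of_nonneg hx2nn, Int.toNat_of_nonneg (by linarith : (0:ℤ) ≤ y0 + an)]
          push_cast
          linarith [hx2eq]
        · left
          rw [Int.toNat_of_nonneg (by linarith : (0:ℤ) ≤ y0 + an)]
          linarith
      · -- Q ≤ y0 : use (x1 - 2*an, y0 - Q, 1)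
        push_neg at hcase
        have hQy0 : Q ≤ y0 := by linarith
        have hkey : (y0 - Q) * bn + cn ≤ n := by
          by_cases hy0top : y0 ≤ (an:ℤ) - 2
          · have h1 : (y0 - Q) * bn ≤ ((an:ℤ) - 2 - Q) * bn :=
              mul_le_mul_of_nonneg_right (by linarith) hBpos.le
            have h2 : ((an:ℤ) - 2 - Q) * bn + cn ≤ G + 1 := by
              rw [hGpq, hA, hB, hC]; exact aux_b3 hP1 hPQ
            linarith
          · have hy0eq : y0 = (an:ℤ) - 1 := by omega
            have hGid : G = ((bn:ℤ) - Q - 1) * an + ((an:ℤ) - 1) * bn := by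
              rw [hGpq, hA, hB]; ring
            have hdvd2 : ((an:ℤ)) ∣ n - G := by
              refine ⟨x1 - ((bn:ℤ) - Q - 1), ?_⟩
              rw [hGid]
              rw [show n - (((bn:ℤ) - Q - 1) * an + ((an:ℤ) - 1) * bn)
                  = (n - ((an:ℤ) - 1) * bn) - ((bn:ℤ) - Q - 1) * an from by ring]
              rw [← hy0eq, hx1]; ring
            obtain ⟨t, ht⟩ := hdvd2
            have ht1 : 1 ≤ t := by
              rcases Int.lt_or_le 0 t with h | h
              · omega
              · exfalso
                have : (an:ℤ) * t ≤ 0 := mul_nonpos_of_nonneg_of_nonpos hApos'.le h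
                omega
            have hnGA : G + an ≤ n := by
              have hmul : (an:ℤ) * 1 ≤ an * t := mul_le_mul_of_nonneg_left ht1 hApos'.le
              linarith [ht, hmul]
            have heqA : (y0 - Q) * bn + cn = G + an := by
              rw [hy0eq, hGpq, hA, hB, hC]
              exact aux_b4
            linarith
        have hx3 : n - ((y0 - Q) * bn + cn) = (an:ℤ) * (x1 - 2 * an) := by
          have hCQB : ((cn:ℤ)) - Q * bn = 2 * (an:ℤ) ^ 2 := by
            rw [hB, hC, hA]; exact aux_CQB
          rw [show n - ((y0 - Q) * (bn:ℤ) + cn) = (n - y0 * bn) + (Q * bn - cn) from by ring,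
            hx1, show Q * (bn:ℤ) - cn = -((cn:ℤ) - Q * bn) from by ring, hCQB]
          ring
        have hx3nn : 0 ≤ x1 - 2 * (an:ℤ) := by
          have h3 : 0 ≤ (an:ℤ) * (x1 - 2 * an) := by rw [← hx3]; linarith
          exact nonneg_of_mul_nonneg_right h3 hApos'
        refine ⟨(x1 - 2 * (an:ℤ)).toNat, (y0 - Q).toNat, 1, ?_, Or.inr one_ne_zero⟩
        rw [Int.toNat_of_nonneg hx3nn, Int.toNat_of_nonneg (by linarith : (0:ℤ) ≤ y0 - Q)]
        push_cast
        linarith [hx3]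
    obtain ⟨x2', y2', z2', hv2, hne⟩ := hsecond
    have h2le : 1 < repCount an bn cn n := by
      unfold repCount
      rw [Finite.one_lt_card_iff_nontrivial]
      refine ⟨⟨⟨x1.toNat, y0.toNat, 0⟩, by exact_mod_cast hv1⟩,
        ⟨⟨x2', y2', z2'⟩, by exact_mod_cast hv2⟩, ?_⟩
      intro heq
      have heq' := Subtype.ext_iff.mp heq
      simp only [Prod.mk.injEq] at heq'
      obtain ⟨hxe, hye, hze⟩ := heq'
      rcases hne with h | h
      · apply h
        rw [← hye, Int.toNat_of_nonneg hy0lb]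
      · exact h hze.symm
    omega
end

section
/- For every integer i ≥ 3, the 2-Frobenius number of (F_i, F_{i+2}, F_{2i}) equals (2·F_i − 1)·F_{i+2} − F_i. -/
lemma repCount_eq_s10 (a b c : ℕ) (n : ℤ) :
    repCount a b c n
      = ({v : ℕ × ℕ × ℕ | (v.1 : ℤ) * a + v.2.1 * b + v.2.2 * c = n}).ncard :=
  Nat.card_coe_set_eq _

/-- Existence of a representation by two coprime numbers beyond the Frobenius number,
with small first coordinate. -/
lemma exists_rep (a b : ℕ) (hb : 0 < b) (hco : IsCoprime (a : ℤ) (b : ℤ)) (m : ℤ)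
    (hm : (a : ℤ) * b - a - b < m) :
    ∃ x y : ℕ, (x : ℤ) < b ∧ (x : ℤ) * a + (y : ℤ) * b = m := by
  obtain ⟨u, v, huv⟩ := hco
  have hbz : (0 : ℤ) < b := by exact_mod_cast hb
  have ha0 : (0 : ℤ) ≤ a := Int.natCast_nonneg a
  set r : ℤ := (m * u) % (b : ℤ) with hrdef
  have hr0 : 0 ≤ r := Int.emod_nonneg _ (by positivity)
  have hrb : r < b := Int.emod_lt_of_pos _ hbz
  have hre : r = m * u - b * ((m * u) / b) := by rw [hrdef, Int.emod_def]
  set t : ℤ := m * v + ((m * u) / b) * a with htdef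
  have ht : m = r * a + t * b := by
    rw [hre, htdef]; linear_combination (-m) * huv
  have ht0 : 0 ≤ t := by
    have h1 : r * a ≤ ((b : ℤ) - 1) * a :=
      mul_le_mul_of_nonneg_right (by linarith) ha0
    by_contra h
    push_neg at h
    have h2 : t ≤ -1 := by linarith
    have h3 : t * b ≤ (-1) * b := mul_le_mul_of_nonneg_right h2 hbz.le
    nlinarith
  refine ⟨r.toNat, t.toNat, ?_, ?_⟩
  · rwa [Int.toNat_of_nonneg hr0]
  · rw [Int.toNat_of_nonneg hr0, Int.toNat_of_nonneg ht0]; linarith [ht]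

set_option maxHeartbeats 2000000 in
lemma main_aux (a b c : ℕ) (ha : 2 ≤ a) (hb : 2 * a + 1 ≤ b) (hb' : b + 1 ≤ 3 * a)
    (hc : (c : ℤ) = 2 * (a : ℤ) * b - 3 * (a : ℤ) ^ 2) (hcop : Nat.Coprime a b) :
    IsPFrob 2 a b c ((2 * (a : ℤ) - 1) * b - a) := by
  have hA : (2 : ℤ) ≤ a := by exact_mod_cast ha
  have hB : 2 * (a : ℤ) + 1 ≤ b := by exact_mod_cast hb
  have hB' : (b : ℤ) + 1 ≤ 3 * a := by exact_mod_cast hb'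
  have hco : IsCoprime (a : ℤ) (b : ℤ) := Nat.isCoprime_iff_coprime.mpr hcop
  have hbpos : 0 < b := by omega
  have hapos : 0 < a := by omega
  have hcpos : (0 : ℤ) < c := by
    have h1 : (0 : ℤ) < (a : ℤ) * (2 * b - 3 * a) := mul_pos (by linarith) (by linarith)
    nlinarith [hc]
  constructor
  · -- g has at most 2 representations
    show repCount a b c ((2 * (a : ℤ) - 1) * b - a) ≤ 2
    rw [repCount_eq_s10]
    have hsub : {v : ℕ × ℕ × ℕ | (v.1 : ℤ) * a + v.2.1 * b + v.2.2 * c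
          = (2 * (a : ℤ) - 1) * b - a}
        ⊆ ({(b - 1, a - 1, 0), (3 * a - 1 - b, a - 1, 1)} : Set (ℕ × ℕ × ℕ)) := by
      rintro ⟨x, y, z⟩ hv
      simp only [Set.mem_setOf_eq] at hv
      have hd1 : (a : ℤ) ∣ ((y : ℤ) + 1) * b :=
        ⟨2 * b - 1 - x - 2 * z * b + 3 * z * a, by linear_combination hv - (z : ℤ) * hc⟩
      have hdy : (a : ℤ) ∣ ((y : ℤ) + 1) := hco.dvd_of_dvd_mul_right hd1
      have hy1 : (a : ℤ) ≤ (y : ℤ) + 1 := Int.le_of_dvd (by positivity) hdy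
      have hz1 : z ≤ 1 := by
        by_contra h
        push_neg at h
        have hz2 : (2 : ℤ) ≤ z := by exact_mod_cast h
        nlinarith [hv, hc, mul_nonneg (by linarith : (0 : ℤ) ≤ (y : ℤ) + 1 - a)
            (by positivity : (0 : ℤ) ≤ (b : ℤ)),
          mul_nonneg (by linarith : (0 : ℤ) ≤ (z : ℤ) - 2) hcpos.le,
          mul_nonneg (Int.natCast_nonneg x) (Int.natCast_nonneg a),
          mul_le_mul_of_nonneg_left hB (by linarith : (0 : ℤ) ≤ (a : ℤ))]
      interval_cases z
      · -- z = 0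
        left
        have hd : (b : ℤ) ∣ ((x : ℤ) + 1) * a :=
          ⟨2 * a - 1 - y, by push_cast at hv; linear_combination hv⟩
        have hdx : (b : ℤ) ∣ ((x : ℤ) + 1) := hco.symm.dvd_of_dvd_mul_right hd
        have hx1 : (b : ℤ) ≤ (x : ℤ) + 1 := Int.le_of_dvd (by positivity) hdx
        have hxu : (x : ℤ) + 1 < 2 * b := by
          have h1 : ((x : ℤ) + 1) * a < 2 * b * a := by
            push_cast at hv
            nlinarith [mul_nonneg (Int.natCast_nonneg y) (Int.natCast_nonneg b)]
          exact lt_of_mul_lt_mul_right h1 (by positivity)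
        have hxb : (x : ℤ) + 1 = b := by
          obtain ⟨k, hk⟩ := hdx
          have hbZ : (0 : ℤ) < b := by exact_mod_cast hbpos
          have h2 : 1 ≤ k := by
            by_contra hh
            push_neg at hh
            have : (b : ℤ) * k ≤ 0 :=
              mul_nonpos_of_nonneg_of_nonpos hbZ.le (by linarith)
            linarith
          have h3 : k < 2 := by
            by_contra hh
            push_neg at hh
            have : 2 * (b : ℤ) ≤ b * k := by nlinarith
            linarith
          have : k = 1 := by omega
          rw [hk, this, mul_one]
        have hya : (y : ℤ) = (a : ℤ) - 1 := by
          have h1 : (y : ℤ) * b = ((a : ℤ) - 1) * b := by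
            push_cast at hv
            linear_combination hv - (a : ℤ) * hxb
          exact mul_right_cancel₀ (by positivity) h1
        simp only [Set.mem_singleton_iff, Prod.mk.injEq]
        exact ⟨by omega, by omega, trivial⟩
      · -- z = 1
        right
        have hyu : (y : ℤ) + 1 < 2 * a := by
          by_contra h
          push_neg at h
          push_cast at hv
          nlinarith [mul_nonneg (Int.natCast_nonneg x) (Int.natCast_nonneg a),
            mul_le_mul_of_nonneg_right (by linarith : 2 * (a : ℤ) - 1 ≤ (y : ℤ))
              (by positivity : (0 : ℤ) ≤ (b : ℤ)),
            mul_le_mul_of_nonneg_left hB (by linarith : (0 : ℤ) ≤ 2 * (a : ℤ) - 1)]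
        have hya : (y : ℤ) + 1 = a := by
          obtain ⟨k, hk⟩ := hdy
          have haZ : (0 : ℤ) < a := by linarith
          have h2 : 1 ≤ k := by
            by_contra hh
            push_neg at hh
            have : (a : ℤ) * k ≤ 0 :=
              mul_nonpos_of_nonneg_of_nonpos haZ.le (by linarith)
            linarith
          have h3 : k < 2 := by
            by_contra hh
            push_neg at hh
            have : 2 * (a : ℤ) ≤ a * k := by nlinarith
            linarith
          have : k = 1 := by omega
          rw [hk, this, mul_one]
        have hxa : (x : ℤ) = 3 * (a : ℤ) - 1 - b := by
          have h1 : (x : ℤ) * a = (3 * (a : ℤ) - 1 - b) * a := by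
            push_cast at hv
            linear_combination hv - hc - (b : ℤ) * hya
          exact mul_right_cancel₀ (by positivity) h1
        simp only [Set.mem_singleton_iff, Prod.mk.injEq]
        exact ⟨by omega, by omega, trivial⟩
    calc ({v : ℕ × ℕ × ℕ | (v.1 : ℤ) * a + v.2.1 * b + v.2.2 * c
            = (2 * (a : ℤ) - 1) * b - a}).ncard
        ≤ ({(b - 1, a - 1, 0), (3 * a - 1 - b, a - 1, 1)} : Set (ℕ × ℕ × ℕ)).ncard :=
          Set.ncard_le_ncard hsub (Set.toFinite _)
      _ ≤ 2 := le_trans (Set.ncard_insert_le _ _) (by simp)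
  · -- upper bound
    rintro n hn
    simp only [Set.mem_setOf_eq] at hn
    by_contra hgt
    push_neg at hgt
    have hn0 : (0 : ℤ) ≤ n := by nlinarith
    obtain ⟨x0, y0, hx0, he0⟩ := exists_rep a b hbpos hco n (by nlinarith)
    have hy0 : a ≤ y0 := by
      by_contra h
      push_neg at h
      have h1 : (y0 : ℤ) ≤ (a : ℤ) - 1 := by
        have : (y0 : ℤ) < a := by exact_mod_cast h
        linarith
      nlinarith [mul_le_mul_of_nonneg_right (by linarith : (x0 : ℤ) ≤ (b : ℤ) - 1)
          (by positivity : (0 : ℤ) ≤ (a : ℤ)),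
        mul_le_mul_of_nonneg_right h1 (by positivity : (0 : ℤ) ≤ (b : ℤ))]
    have harg : (a : ℤ) * b - a - b < n - c := by
      nlinarith [mul_nonneg (by linarith : (0 : ℤ) ≤ (a : ℤ))
        (by linarith : (0 : ℤ) ≤ 3 * (a : ℤ) - b)]
    obtain ⟨x1, y1, hx1, he1⟩ := exists_rep a b hbpos hco (n - c) harg
    set S : Set (ℕ × ℕ × ℕ) :=
      {v : ℕ × ℕ × ℕ | (v.1 : ℤ) * a + v.2.1 * b + v.2.2 * c = n} with hSdef
    have hSfin : S.Finite := by
      apply Set.Finite.subset (Set.finite_Iic (n.toNat, n.toNat, n.toNat))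
      rintro ⟨x, y, z⟩ hv
      simp only [hSdef, Set.mem_setOf_eq] at hv
      have hxa : (x : ℤ) ≤ n := by
        nlinarith [mul_le_mul_of_nonneg_left (by linarith : (1 : ℤ) ≤ (a : ℤ))
            (Int.natCast_nonneg x),
          mul_nonneg (Int.natCast_nonneg y) (Int.natCast_nonneg b),
          mul_nonneg (Int.natCast_nonneg z) hcpos.le]
      have hyb : (y : ℤ) ≤ n := by
        nlinarith [mul_le_mul_of_nonneg_left (by linarith : (1 : ℤ) ≤ (b : ℤ))
            (Int.natCast_nonneg y),
          mul_nonneg (Int.natCast_nonneg x) (Int.natCast_nonneg a),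
          mul_nonneg (Int.natCast_nonneg z) hcpos.le]
      have hzc : (z : ℤ) ≤ n := by
        nlinarith [mul_le_mul_of_nonneg_left (by linarith : (1 : ℤ) ≤ (c : ℤ))
            (Int.natCast_nonneg z),
          mul_nonneg (Int.natCast_nonneg x) (Int.natCast_nonneg a),
          mul_nonneg (Int.natCast_nonneg y) (Int.natCast_nonneg b)]
      simp only [Set.mem_Iic, Prod.le_def]
      refine ⟨by omega, by omega, by omega⟩
    have hs1 : ((x0, y0, 0) : ℕ × ℕ × ℕ) ∈ S := by
      simp only [hSdef, Set.mem_setOf_eq]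
      push_cast
      linarith [he0]
    have hs2 : ((x0 + b, y0 - a, 0) : ℕ × ℕ × ℕ) ∈ S := by
      simp only [hSdef, Set.mem_setOf_eq]
      push_cast [hy0]
      linear_combination he0
    have hs3 : ((x1, y1, 1) : ℕ × ℕ × ℕ) ∈ S := by
      simp only [hSdef, Set.mem_setOf_eq]
      push_cast
      linear_combination he1
    have h12 : ((x0, y0, 0) : ℕ × ℕ × ℕ) ≠ (x0 + b, y0 - a, 0) := by
      simp only [ne_eq, Prod.mk.injEq]
      intro h
      omega
    have h13 : ((x0, y0, 0) : ℕ × ℕ × ℕ) ≠ (x1, y1, 1) := by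
      simp only [ne_eq, Prod.mk.injEq]
      intro h
      omega
    have h23 : ((x0 + b, y0 - a, 0) : ℕ × ℕ × ℕ) ≠ (x1, y1, 1) := by
      simp only [ne_eq, Prod.mk.injEq]
      intro h
      omega
    have hss : ({(x0, y0, 0), (x0 + b, y0 - a, 0), (x1, y1, 1)} : Set (ℕ × ℕ × ℕ)) ⊆ S := by
      intro v hv
      rcases hv with rfl | rfl | rfl
      · exact hs1
      · exact hs2
      · exact hs3
    have hcard3 :
        ({(x0, y0, 0), (x0 + b, y0 - a, 0), (x1, y1, 1)} : Set (ℕ × ℕ × ℕ)).ncard = 3 := by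
      rw [Set.ncard_insert_of_notMem (by simp [h12, h13]) (Set.toFinite _),
        Set.ncard_insert_of_notMem (by simp [h23]) (Set.toFinite _), Set.ncard_singleton]
    have h3 : 3 ≤ S.ncard := by
      calc 3 = ({(x0, y0, 0), (x0 + b, y0 - a, 0), (x1, y1, 1)} : Set (ℕ × ℕ × ℕ)).ncard :=
            hcard3.symm
        _ ≤ S.ncard := Set.ncard_le_ncard hss hSfin
    rw [repCount_eq_s10] at hn
    rw [← hSdef] at hn
    omega

theorem stmt10 (i : ℕ) (hi : 3 ≤ i) :
    letI F := Nat.fib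
    IsPFrob 2 (F i) (F (i + 2)) (F (2 * i))
      ((2 * (F i : ℤ) - 1) * F (i + 2) - F i) := by
  obtain ⟨j, rfl⟩ : ∃ j, i = j + 3 := ⟨i - 3, by omega⟩
  show IsPFrob 2 (Nat.fib (j + 3)) (Nat.fib (j + 5)) (Nat.fib (2 * (j + 3)))
      ((2 * (Nat.fib (j + 3) : ℤ) - 1) * Nat.fib (j + 5) - Nat.fib (j + 3))
  have h1 : Nat.fib (j + 5) = Nat.fib (j + 3) + Nat.fib (j + 4) := Nat.fib_add_two
  have h2 : Nat.fib (j + 4) = Nat.fib (j + 2) + Nat.fib (j + 3) := Nat.fib_add_two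
  have h3 : Nat.fib (j + 3) = Nat.fib (j + 1) + Nat.fib (j + 2) := Nat.fib_add_two
  have hfj1 : 0 < Nat.fib (j + 1) := Nat.fib_pos.mpr (by omega)
  have hfj2 : 0 < Nat.fib (j + 2) := Nat.fib_pos.mpr (by omega)
  have ha : 2 ≤ Nat.fib (j + 3) := by
    calc 2 = Nat.fib 3 := rfl
      _ ≤ Nat.fib (j + 3) := Nat.fib_mono (by omega)
  have hbineq : 2 * Nat.fib (j + 3) + 1 ≤ Nat.fib (j + 5) := by omega
  have hb' : Nat.fib (j + 5) + 1 ≤ 3 * Nat.fib (j + 3) := by omega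
  have h4 := Nat.fib_two_mul (j + 3)
  have h5 : Nat.fib (j + 3) ≤ 2 * Nat.fib (j + 4) := by omega
  have hc : ((Nat.fib (2 * (j + 3)) : ℤ))
      = 2 * (Nat.fib (j + 3) : ℤ) * (Nat.fib (j + 5)) - 3 * (Nat.fib (j + 3) : ℤ) ^ 2 := by
    rw [h4]
    push_cast [h5]
    have h1' : (Nat.fib (j + 5) : ℤ) = Nat.fib (j + 3) + Nat.fib (j + 4) := by
      exact_mod_cast h1
    rw [h1']
    ring
  have hcop : Nat.Coprime (Nat.fib (j + 3)) (Nat.fib (j + 5)) := by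
    have hg : Nat.gcd (j + 3) (j + 5) = Nat.gcd (j + 3) 2 := Nat.gcd_self_add_right (j + 3) 2
    have hd : Nat.gcd (j + 3) 2 = 1 ∨ Nat.gcd (j + 3) 2 = 2 :=
      (Nat.dvd_prime Nat.prime_two).mp (Nat.gcd_dvd_right _ _)
    have hfg := Nat.fib_gcd (j + 3) (j + 5)
    unfold Nat.Coprime
    rw [← hfg, hg]
    rcases hd with h | h <;> rw [h] <;> decide
  exact main_aux _ _ _ ha hbineq hb' hc hcop
end
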